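/- arXiv:2006.15737 — 5 statements merged into one kernel-verified Lean document; each statement's English description precedes it below -/
import Mathlib

section
/- If G is a finite p-group and N is a normal subgroup of G of index p^i with i ≥ 2, then K_i(G) ≤ N, where K_i(G) is the i-th term of the lower central series. -/
/-!
The quotient `G ⧸ N` has order `p ^ i`, so it suffices that a group of order `p ^ n` with
`n ≥ 2` has nilpotency class at most `n - 1`. This goes by induction on `n` through the quotient
by the centre, which is nontrivial: if `G ⧸ Z(G)` has order at most `p` it is cyclic and `G` is
abelian, and otherwise the induction hypothesis applies to `G ⧸ Z(G)`, whose class is one less.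
-/

open Subgroup

namespace IsPGroup

variable {p : ℕ} [Fact p.Prime] {G : Type*} [Group G] [Finite G]

theorem exists_card_quotient_center_eq_pow_lt {n : ℕ} (hG : Nat.card G = p ^ n) (hn : 0 < n) :
    ∃ m < n, Nat.card (G ⧸ center G) = p ^ m := by
  obtain ⟨k, hk, hZ⟩ := card_center_eq_prime_pow hG hn
  obtain ⟨m, hm⟩ := iff_card.mp ((of_card hG).to_quotient (center G))
  have hkm : p ^ (k + m) = p ^ n := by
    rw [pow_add, ← hZ, ← hm, ← hG, ← (center G).card_mul_index]
    rfl
  have hkn : k + m = n := Nat.pow_right_injective (Fact.out : p.Prime).two_le hkm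
  exact ⟨m, by omega, hm⟩

theorem nilpotencyClass_le_pred {n : ℕ} (hG : Nat.card G = p ^ n) (hn : 2 ≤ n) :
    Group.nilpotencyClass G ≤ n - 1 := by
  induction n using Nat.strong_induction_on generalizing G with
  | _ n ih =>
    have : Group.IsNilpotent G := (of_card hG).isNilpotent
    obtain ⟨m, hmn, hm⟩ := exists_card_quotient_center_eq_pow_lt hG (by omega)
    rcases le_or_gt m 1 with hm1 | hm1
    · have : IsCyclic (G ⧸ center G) :=
        isCyclic_of_card_dvd_prime (hm ▸ (pow_dvd_pow p hm1).trans (pow_one p).dvd)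
      have := isMulCommutative_of_isCyclic_quotient_center_self G
      have := Group.IsNilpotent.nilpotencyClass_le_one_iff.mpr this
      omega
    · have := ih m hmn hm hm1
      rw [Group.nilpotencyClass_quotient_center] at this
      omega

theorem lowerCentralSeries_pred_eq_bot {n : ℕ} (hG : Nat.card G = p ^ n) (hn : 2 ≤ n) :
    (⊤ : Subgroup G).lowerCentralSeries (n - 1) = ⊥ := by
  have : Group.IsNilpotent G := (of_card hG).isNilpotent
  exact Subgroup.lowerCentralSeries_eq_bot_iff_nilpotencyClass_le.mpr
    (nilpotencyClass_le_pred hG hn)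

end IsPGroup

theorem Subgroup.lowerCentralSeries_le_iff_quotient_eq_bot {G : Type*} [Group G]
    (N : Subgroup G) [N.Normal] (n : ℕ) :
    (⊤ : Subgroup G).lowerCentralSeries n ≤ N ↔
      (⊤ : Subgroup (G ⧸ N)).lowerCentralSeries n = ⊥ := by
  rw [← (map_top_of_surjective _ (QuotientGroup.mk'_surjective N)), ← map_lowerCentralSeries,
    map_eq_bot_iff, QuotientGroup.ker_mk']

theorem stmt_3_general {p : ℕ} (hp : p.Prime) (G : Type*) [Group G]
    (N : Subgroup G) (hN : N.Normal) (i : ℕ) (hi : 2 ≤ i)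
    (hidx : N.index = p ^ i) :
    (⊤ : Subgroup G).lowerCentralSeries (i - 1) ≤ N := by
  have : Fact p.Prime := ⟨hp⟩
  have hcard : Nat.card (G ⧸ N) = p ^ i := N.index_eq_card ▸ hidx
  have : Finite (G ⧸ N) := Nat.finite_of_card_ne_zero (hcard ▸ pow_ne_zero i hp.ne_zero)
  rw [N.lowerCentralSeries_le_iff_quotient_eq_bot]
  exact IsPGroup.lowerCentralSeries_pred_eq_bot hcard hi

/-- If `G` is a finite `p`-group and `N ⊴ G` has index `p ^ i` with `i ≥ 2`, then
`K_i(G) ≤ N`, where `K_i(G)` (with `K_1(G) = G`) is the `i`-th term of the lower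
central series, i.e. `K_i(G) = lowerCentralSeries G (i - 1)`. -/
theorem stmt_3 {p : ℕ} (hp : p.Prime) (G : Type*) [Group G] [Finite G]
    (hpG : IsPGroup p G) (N : Subgroup G) (hN : N.Normal) (i : ℕ) (hi : 2 ≤ i)
    (hidx : N.index = p ^ i) :
    (⊤ : Subgroup G).lowerCentralSeries (i - 1) ≤ N :=
  stmt_3_general hp G N hN i hi hidx
end

section
/- Let G be a p-group of maximal class and order p^m. If N is a normal subgroup of G of index p^i with 2 ≤ i ≤ m, then N = K_i(G). In particular, for each 1 ≤ i < m−1, G has exactly one normal subgroup of order p^i. -/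
/-!
In a finite `p`-group every strict inclusion of subgroups has index divisible by `p`, so each
strict step of the lower central series `γ₀ = G ≥ γ₁ ≥ ⋯` contributes a factor `p`. Moreover
`G/γ₁` is cyclic only if `γ₁ = γ₂`, because a cyclic quotient by the central subgroup `γ₁/γ₂`
of `G/γ₂` forces `G/γ₂` to be abelian. Hence `p^(n+1)` divides `|G : γₙ|` whenever `n ≥ 1` and
`γₙ₊₁ < γₙ`, and a group of order `p^(n+1)` has `γₙ = 1`.

For `G` of maximal class (order `p^(c+1)`, class `c`) this pins down `|γₖ| = p^(c-k)` for
`1 ≤ k < c`. If `N ⊴ G` has index `p^i` with `i ≥ 2`, then `G/N` has order `p^i`, so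
`γ_{i-1} ≤ N`, and `|γ_{i-1}| ≥ p^(c+1-i) = |N|` forces equality.
-/

namespace Subgroup

variable {Q : Type*} [Group Q]

lemma lowerCentralSeries_add_eq_of_succ_eq {S : Subgroup Q} {n : ℕ}
    (h : S.lowerCentralSeries (n + 1) = S.lowerCentralSeries n) :
    ∀ j, S.lowerCentralSeries (n + j) = S.lowerCentralSeries n
  | 0 => rfl
  | j + 1 => by
    rw [← add_assoc, lowerCentralSeries_succ, lowerCentralSeries_add_eq_of_succ_eq h j,
      ← lowerCentralSeries_succ, h]

lemma lowerCentralSeries_succ_lt [Group.IsNilpotent Q] {n : ℕ}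
    (h : (⊤ : Subgroup Q).lowerCentralSeries n ≠ ⊥) :
    (⊤ : Subgroup Q).lowerCentralSeries (n + 1) < (⊤ : Subgroup Q).lowerCentralSeries n := by
  refine lt_of_le_of_ne (lowerCentralSeries_antitone _ n.le_succ) fun he => h ?_
  rw [← lowerCentralSeries_add_eq_of_succ_eq he (Group.nilpotencyClass Q)]
  exact lowerCentralSeries_eq_bot_iff_nilpotencyClass_le.mpr (Nat.le_add_left _ _)

lemma lowerCentralSeries_ne_bot_of_lt_nilpotencyClass [Group.IsNilpotent Q] {n : ℕ}
    (h : n < Group.nilpotencyClass Q) : (⊤ : Subgroup Q).lowerCentralSeries n ≠ ⊥ :=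
  fun h' => (lowerCentralSeries_eq_bot_iff_nilpotencyClass_le.mp h').not_gt h

lemma lowerCentralSeries_succ_lt_of_succ_succ_lt {S : Subgroup Q} {n : ℕ}
    (h : S.lowerCentralSeries (n + 2) < S.lowerCentralSeries (n + 1)) :
    S.lowerCentralSeries (n + 1) < S.lowerCentralSeries n := by
  refine lt_of_le_of_ne (lowerCentralSeries_antitone _ n.le_succ) fun he => h.ne ?_
  rw [lowerCentralSeries_add_eq_of_succ_eq he 2, lowerCentralSeries_add_eq_of_succ_eq he 1]

lemma lowerCentralSeries_one_le_two_of_isCyclic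
    [IsCyclic (Q ⧸ (⊤ : Subgroup Q).lowerCentralSeries 1)] :
    (⊤ : Subgroup Q).lowerCentralSeries 1 ≤ (⊤ : Subgroup Q).lowerCentralSeries 2 := by
  let f :
      Q ⧸ (⊤ : Subgroup Q).lowerCentralSeries 2 →* Q ⧸ (⊤ : Subgroup Q).lowerCentralSeries 1 :=
    QuotientGroup.map _ _ (MonoidHom.id Q) (lowerCentralSeries_antitone _ one_le_two)
  have hker : f.ker ≤ center _ := by
    intro q hq
    obtain ⟨x, rfl⟩ := QuotientGroup.mk_surjective q
    have hx : x ∈ (⊤ : Subgroup Q).lowerCentralSeries 1 := (QuotientGroup.eq_one_iff x).mp hq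
    refine mem_center_iff.mpr fun q' => ?_
    obtain ⟨y, rfl⟩ := QuotientGroup.mk_surjective q'
    refine (commutatorElement_eq_one_iff_mul_comm.mp ?_).symm
    exact (map_commutatorElement (QuotientGroup.mk' _) x y).symm.trans
      ((QuotientGroup.eq_one_iff _).mpr (commutator_mem_commutator hx (mem_top y)))
  have := f.isMulCommutative_of_isCyclic_of_ker_le_center hker
  exact Normal.quotient_commutative_iff_commutator_le.mp this

lemma lowerCentralSeries_le_of_quotient_eq_bot (N : Subgroup Q) [N.Normal] {n : ℕ}
    (h : (⊤ : Subgroup (Q ⧸ N)).lowerCentralSeries n = ⊥) :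
    (⊤ : Subgroup Q).lowerCentralSeries n ≤ N := by
  rw [← QuotientGroup.ker_mk' N, ← map_eq_bot_iff, map_lowerCentralSeries,
    map_top_of_surjective _ (QuotientGroup.mk'_surjective N), h]

end Subgroup

namespace IsPGroup

variable {p : ℕ} [Fact p.Prime] {Q : Type*} [Group Q] [Finite Q] (hQ : IsPGroup p Q)
include hQ

lemma dvd_relIndex_of_lt {H K : Subgroup Q} (h : H < K) : p ∣ H.relIndex K := by
  obtain ⟨n, hn⟩ := (hQ.to_subgroup K).index (H.subgroupOf K)
  have hn0 : n ≠ 0 := by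
    rintro rfl
    exact h.not_ge (Subgroup.relIndex_eq_one.mp hn)
  rw [Subgroup.relIndex, hn]
  exact dvd_pow_self p hn0

lemma pow_succ_dvd_index_of_lt {H K : Subgroup Q} {j : ℕ} (h : H < K) (hK : p ^ j ∣ K.index) :
    p ^ (j + 1) ∣ H.index := by
  rw [← Subgroup.relIndex_mul_index h.le, pow_succ']
  exact mul_dvd_mul (hQ.dvd_relIndex_of_lt h) hK

lemma pow_succ_dvd_card_of_lt {H K : Subgroup Q} {j : ℕ} (h : H < K) (hH : p ^ j ∣ Nat.card H) :
    p ^ (j + 1) ∣ Nat.card K := by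
  have hmul := Subgroup.relIndex_mul_relIndex ⊥ H K bot_le h.le
  rw [Subgroup.relIndex_bot_left, Subgroup.relIndex_bot_left] at hmul
  rw [← hmul, pow_succ]
  exact mul_dvd_mul hH (hQ.dvd_relIndex_of_lt h)

lemma sq_dvd_index_lowerCentralSeries_one
    (h : (⊤ : Subgroup Q).lowerCentralSeries 2 < (⊤ : Subgroup Q).lowerCentralSeries 1) :
    p ^ 2 ∣ ((⊤ : Subgroup Q).lowerCentralSeries 1).index := by
  obtain ⟨a, ha⟩ := hQ.index ((⊤ : Subgroup Q).lowerCentralSeries 1)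
  rw [ha]
  refine pow_dvd_pow p (not_lt.mp fun ha2 => h.not_ge ?_)
  have : IsCyclic (Q ⧸ (⊤ : Subgroup Q).lowerCentralSeries 1) := by
    refine isCyclic_of_card_dvd_prime (p := p) ?_
    rw [← Subgroup.index_eq_card, ha]
    exact (pow_dvd_pow p (Nat.le_of_lt_succ ha2)).trans (pow_one p).dvd
  exact Subgroup.lowerCentralSeries_one_le_two_of_isCyclic

lemma pow_dvd_index_lowerCentralSeries {k : ℕ}
    (h : (⊤ : Subgroup Q).lowerCentralSeries (k + 2) <
      (⊤ : Subgroup Q).lowerCentralSeries (k + 1)) :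
    p ^ (k + 2) ∣ ((⊤ : Subgroup Q).lowerCentralSeries (k + 1)).index := by
  induction k with
  | zero => exact hQ.sq_dvd_index_lowerCentralSeries_one h
  | succ k ih =>
    have h' := Subgroup.lowerCentralSeries_succ_lt_of_succ_succ_lt h
    exact hQ.pow_succ_dvd_index_of_lt h' (ih h')

lemma pow_sub_dvd_card_lowerCentralSeries (k : ℕ) :
    p ^ (Group.nilpotencyClass Q - k) ∣ Nat.card ((⊤ : Subgroup Q).lowerCentralSeries k) := by
  have := hQ.isNilpotent
  suffices ∀ j k, Group.nilpotencyClass Q - k = j →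
      p ^ j ∣ Nat.card ((⊤ : Subgroup Q).lowerCentralSeries k) from this _ k rfl
  intro j
  induction j with
  | zero => simp
  | succ j ih =>
    intro k hk
    have hlt := Subgroup.lowerCentralSeries_succ_lt
      (Subgroup.lowerCentralSeries_ne_bot_of_lt_nilpotencyClass (Q := Q) (n := k) (by omega))
    exact hQ.pow_succ_dvd_card_of_lt hlt (ih (k + 1) (by omega))

end IsPGroup

lemma Subgroup.lowerCentralSeries_eq_bot_of_card_dvd_pow {p : ℕ} [hp : Fact p.Prime] {Q : Type*}
    [Group Q] {n : ℕ} (hn : 1 ≤ n) (hQ : Nat.card Q ∣ p ^ (n + 1)) :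
    (⊤ : Subgroup Q).lowerCentralSeries n = ⊥ := by
  have : Finite Q :=
    Nat.finite_of_card_ne_zero (ne_zero_of_dvd_ne_zero (pow_ne_zero _ hp.out.ne_zero) hQ)
  have hpQ := IsPGroup.of_card_dvd_pow hQ
  have := hpQ.isNilpotent
  obtain ⟨k, rfl⟩ := Nat.exists_eq_add_of_le' hn
  by_contra h
  have hlt := Subgroup.lowerCentralSeries_succ_lt h
  have hdvd := (hpQ.pow_succ_dvd_index_of_lt hlt (hpQ.pow_dvd_index_lowerCentralSeries hlt)).trans
    ((Subgroup.index_dvd_card _).trans hQ)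
  have := (Nat.pow_dvd_pow_iff_le_right hp.out.one_lt).mp hdvd
  omega

lemma Subgroup.card_eq_of_pow_dvd_card_of_pow_dvd_index {G : Type*} [Group G] {H : Subgroup G}
    {p a b : ℕ} (hp : p ≠ 0) (hG : Nat.card G = p ^ (a + b)) (ha : p ^ a ∣ Nat.card H)
    (hb : p ^ b ∣ H.index) : Nat.card H = p ^ a := by
  obtain ⟨x, hx⟩ := ha
  obtain ⟨y, hy⟩ := hb
  have h := Subgroup.card_mul_index H
  rw [hx, hy, hG, mul_mul_mul_comm, ← pow_add, Nat.mul_eq_left (pow_ne_zero _ hp)] at h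
  rw [hx, Nat.eq_one_of_mul_eq_one_right h, mul_one]

lemma eq_pow_sub_of_mul_pow_eq_pow {p n i a : ℕ} (hp : 1 < p) (h : a * p ^ i = p ^ n) :
    a = p ^ (n - i) := by
  have hi : i ≤ n := (Nat.pow_dvd_pow_iff_le_right hp).mp (h ▸ dvd_mul_left _ _)
  rw [← Nat.pow_div hi (by omega), ← h, Nat.mul_div_cancel _ (by positivity)]

section MaximalClass

variable {p : ℕ} [hp : Fact p.Prime] {G : Type*} [Group G]
  (hG : Nat.card G = p ^ (Group.nilpotencyClass G + 1))
include hG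

lemma card_lowerCentralSeries_of_maximalClass {k : ℕ} (hk : 1 ≤ k)
    (hkc : k < Group.nilpotencyClass G) :
    Nat.card ((⊤ : Subgroup G).lowerCentralSeries k) = p ^ (Group.nilpotencyClass G - k) := by
  have hpG := IsPGroup.of_card hG
  have : Finite G := Nat.finite_of_card_ne_zero (hG ▸ pow_ne_zero _ hp.out.ne_zero)
  have := hpG.isNilpotent
  obtain ⟨j, rfl⟩ := Nat.exists_eq_add_of_le' hk
  have hlt := Subgroup.lowerCentralSeries_succ_lt
    (Subgroup.lowerCentralSeries_ne_bot_of_lt_nilpotencyClass hkc)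
  refine Subgroup.card_eq_of_pow_dvd_card_of_pow_dvd_index hp.out.ne_zero ?_
    (hpG.pow_sub_dvd_card_lowerCentralSeries (j + 1)) (hpG.pow_dvd_index_lowerCentralSeries hlt)
  rw [hG]
  congr 1
  omega

lemma eq_lowerCentralSeries_of_maximalClass (N : Subgroup G) [N.Normal] {i : ℕ} (hi : 2 ≤ i)
    (hN : N.index = p ^ i) : N = (⊤ : Subgroup G).lowerCentralSeries (i - 1) := by
  have hpG := IsPGroup.of_card hG
  have : Finite G := Nat.finite_of_card_ne_zero (hG ▸ pow_ne_zero _ hp.out.ne_zero)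
  have hle := Subgroup.lowerCentralSeries_le_of_quotient_eq_bot N
    (Subgroup.lowerCentralSeries_eq_bot_of_card_dvd_pow (n := i - 1) (by omega)
      (by rw [← Subgroup.index_eq_card, hN, Nat.sub_add_cancel (by omega : 1 ≤ i)]))
  have hcardN := eq_pow_sub_of_mul_pow_eq_pow hp.out.one_lt
    (hN ▸ hG ▸ Subgroup.card_mul_index N)
  refine (Subgroup.eq_of_le_of_card_ge hle ?_).symm
  calc Nat.card N = p ^ (Group.nilpotencyClass G - (i - 1)) := by rw [hcardN]; congr 1; omega
    _ ≤ _ := Nat.le_of_dvd Nat.card_pos (hpG.pow_sub_dvd_card_lowerCentralSeries (i - 1))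

end MaximalClass

theorem stmt_5_general {p m : ℕ} (hp : p.Prime) (G : Type*) [Group G]
    (hG : Nat.card G = p ^ m)
    (hcl : upperCentralSeries G (m - 1) = ⊤) (hcl' : upperCentralSeries G (m - 2) ≠ ⊤) :
    (∀ N : Subgroup G, N.Normal → ∀ i : ℕ, 2 ≤ i → i ≤ m → N.index = p ^ i →
        N = Subgroup.lowerCentralSeries (⊤ : Subgroup G) (i - 1)) ∧
    (∀ i : ℕ, 1 ≤ i → i < m - 1 →
        ∃! N : Subgroup G, N.Normal ∧ Nat.card N = p ^ i) := by
  have : Fact p.Prime := ⟨hp⟩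
  have : Group.IsNilpotent G := ⟨⟨m - 1, hcl⟩⟩
  have hclass : Group.nilpotencyClass G + 1 = m := by
    have h1 := Subgroup.upperCentralSeries_eq_top_iff_nilpotencyClass_le.mp hcl
    have h2 := mt Subgroup.upperCentralSeries_eq_top_iff_nilpotencyClass_le.mpr hcl'
    omega
  have hG' : Nat.card G = p ^ (Group.nilpotencyClass G + 1) := hclass ▸ hG
  refine ⟨fun N _ i hi _ hN => eq_lowerCentralSeries_of_maximalClass hG' N hi hN,
    fun i hi him => ⟨(⊤ : Subgroup G).lowerCentralSeries (m - 1 - i), ⟨inferInstance, ?_⟩, ?_⟩⟩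
  · rw [card_lowerCentralSeries_of_maximalClass hG' (by omega) (by omega)]
    congr 1
    omega
  · rintro N ⟨_, hN⟩
    have hidx := eq_pow_sub_of_mul_pow_eq_pow hp.one_lt (hN ▸ hG ▸ Subgroup.index_mul_card N)
    rw [eq_lowerCentralSeries_of_maximalClass hG' N (by omega) hidx]
    congr 1
    omega

/-- Let `G` be a `p`-group of maximal class and order `p ^ m`. If `N ⊴ G` has index
`p ^ i` with `2 ≤ i ≤ m`, then `N = K_i(G) = lowerCentralSeries G (i - 1)`.
In particular, for each `1 ≤ i < m - 1`, `G` has exactly one normal subgroup of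
order `p ^ i`. -/
theorem stmt_5 {p m : ℕ} (hp : p.Prime) (hm : 3 ≤ m) (G : Type*) [Group G]
    (hG : Nat.card G = p ^ m)
    (hcl : upperCentralSeries G (m - 1) = ⊤) (hcl' : upperCentralSeries G (m - 2) ≠ ⊤) :
    (∀ N : Subgroup G, N.Normal → ∀ i : ℕ, 2 ≤ i → i ≤ m → N.index = p ^ i →
        N = Subgroup.lowerCentralSeries (⊤ : Subgroup G) (i - 1)) ∧
    (∀ i : ℕ, 1 ≤ i → i < m - 1 →
        ∃! N : Subgroup G, N.Normal ∧ Nat.card N = p ^ i) :=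
  stmt_5_general hp G hG hcl hcl'
end

section
/- (M. Suzuki) Let G be a nonabelian finite p-group. If A is a proper subgroup of G of order p^2 such that C_G(A) = A, then G is of maximal class. -/
/-- A finite `p`-group is of *maximal class* if it has order `p ^ m` for some `m ≥ 2`
and its nilpotency class is exactly `m - 1`. -/
def IsMaximalClass (p : ℕ) (G : Type*) [Group G] : Prop :=
  ∃ m : ℕ, 2 ≤ m ∧ Nat.card G = p ^ m ∧
    upperCentralSeries G (m - 1) = ⊤ ∧ upperCentralSeries G (m - 2) ≠ ⊤

/-!
Induction on `|G|`; the case `A = G` is a group of order `p²`. If `A < G`, then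
`Z(G) ≤ C_G(A) = A` and `A` is not central, so `|Z(G)| = p`, `A = Z(G)⟨a⟩` and `C_G(a) = A`.
In `Ḡ = G/Z(G)` put `B̄ = C_Ḡ(Ā)`. On the preimage `B` of `B̄`, `b ↦ ⁅b, a⁆` is
a homomorphism into `Z(G)` with kernel `C_B(a) ≤ A`, so `|B̄| ≤ p²`; and `B̄ = Ā` would make `Ā` a
self-centralizing subgroup of order `p`, forcing `Ḡ = Ā` and `G = A`.
Hence `B̄` is abelian of order `p²` and self-centralizing, so `Ḡ` is of maximal class by induction,
and then so is `G` because `|Z(G)| = p`.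
-/

open Subgroup QuotientGroup
open scoped commutatorElement

namespace Subgroup
variable {G : Type*} [Group G]

theorem card_comap_mk' (N : Subgroup G) [N.Normal] (H : Subgroup (G ⧸ N)) :
    Nat.card (H.comap (mk' N)) = Nat.card N * Nat.card H :=
  card_preimage_mk N H

theorem eq_of_lt_of_le_of_relIndex_prime {H L K : Subgroup G} (hp : (H.relIndex K).Prime)
    (hHL : H < L) (hLK : L ≤ K) : L = K := by
  rw [← relIndex_mul_relIndex H L K hHL.le hLK, Nat.prime_mul_iff] at hp
  rcases hp with ⟨-, hLK'⟩ | ⟨-, hHL'⟩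
  · exact le_antisymm hLK (relIndex_eq_one.mp hLK')
  · exact absurd (relIndex_eq_one.mp hHL') (not_le_of_gt hHL)

theorem center_lt_of_centralizer_eq_self {H : Subgroup G} (hcent : centralizer (H : Set G) = H)
    (hH : H ≠ ⊤) : center G < H := by
  refine lt_of_le_of_ne (hcent ▸ center_le_centralizer (H : Set G)) fun hZH => hH ?_
  rw [← hcent, ← hZH, centralizer_eq_top_iff_subset]

theorem centralizer_center_sup_closure_singleton (a : G) :
    centralizer ((center G ⊔ closure {a} : Subgroup G) : Set G) = centralizer {a} := by
  refine le_antisymm (centralizer_le ?_) fun x hx h hh => ?_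
  · exact Set.singleton_subset_iff.mpr (mem_sup_right (subset_closure rfl))
  · have hle : center G ⊔ closure {a} ≤ centralizer {x} :=
      sup_le (center_le_centralizer _) <| (closure_le _).mpr <| Set.singleton_subset_iff.mpr <|
        mem_centralizer_singleton_iff.mpr (mem_centralizer_singleton_iff.mp hx).symm
    exact mem_centralizer_singleton_iff.mp (hle hh)

theorem card_comap_centralizer_le [Finite G] (g : G) :
    Nat.card ((centralizer {mk' (center G) g}).comap (mk' (center G))) ≤
      Nat.card (centralizer {g}) * Nat.card (center G) := by
  set B := (centralizer {mk' (center G) g}).comap (mk' (center G))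
  have hB (b : B) : ⁅(b : G), g⁆ ∈ center G := by
    rw [← eq_one_iff (N := center G), ← mk'_apply, map_commutatorElement,
      commutatorElement_eq_one_iff_mul_comm]
    exact mem_centralizer_singleton_iff.mp (mem_comap.mp b.2)
  -- a homomorphism because its values are central
  let φ : B →* center G :=
    { toFun := fun b => ⟨⁅(b : G), g⁆, hB b⟩
      map_one' := by ext; simp
      map_mul' := fun b c => by
        ext
        have hcomm := mem_center_iff.mp (hB c)
        calc ⁅((b * c : B) : G), g⁆ = b * ⁅(c : G), g⁆ * (g * (b : G)⁻¹ * g⁻¹) := by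
              simp only [coe_mul, commutatorElement_def]; group
          _ = ⁅(c : G), g⁆ * ⁅(b : G), g⁆ := by
              rw [hcomm, commutatorElement_def (b : G)]; group
          _ = ⁅(b : G), g⁆ * ⁅(c : G), g⁆ := (hcomm _).symm }
  have hker : Nat.card φ.ker ≤ Nat.card (centralizer {g}) := by
    refine Nat.card_le_card_of_injective (fun x => ⟨x.1, ?_⟩) fun x y hxy => ?_
    · have hx : ⁅((x : B) : G), g⁆ = 1 := congrArg Subtype.val x.2
      exact mem_centralizer_singleton_iff.mpr (commutatorElement_eq_one_iff_mul_comm.mp hx)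
    · exact Subtype.ext (Subtype.ext (congrArg Subtype.val hxy :))
  calc Nat.card B = Nat.card φ.ker * φ.ker.index := (card_mul_index _).symm
    _ = Nat.card φ.ker * Nat.card φ.range := by rw [index_ker]
    _ ≤ _ := Nat.mul_le_mul hker (card_le_card_group _)

end Subgroup

-- `IsMaximalClass` uses the deprecated alias `upperCentralSeries`, which does not unfold in `rw`
theorem isMaximalClass_iff {p : ℕ} {G : Type*} [Group G] :
    IsMaximalClass p G ↔ ∃ m : ℕ, 2 ≤ m ∧ Nat.card G = p ^ m ∧
      Subgroup.upperCentralSeries G (m - 1) = ⊤ ∧ Subgroup.upperCentralSeries G (m - 2) ≠ ⊤ :=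
  Iff.rfl

theorem isMaximalClass_of_card_eq_prime_sq {p : ℕ} [Fact p.Prime] {G : Type*} [Group G]
    (hG : Nat.card G = p ^ 2) : IsMaximalClass p G := by
  have : Finite G := Nat.finite_of_card_ne_zero (by simp [hG, (Fact.out : p.Prime).ne_zero])
  have : Nontrivial G := Finite.one_lt_card_iff_nontrivial.mp
    (hG ▸ Nat.one_lt_pow two_ne_zero (Fact.out : p.Prime).one_lt)
  refine isMaximalClass_iff.mpr ⟨2, le_rfl, hG, ?_, ?_⟩
  · rw [show 2 - 1 = 1 from rfl, Subgroup.upperCentralSeries_one, center_eq_top_iff]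
    exact IsPGroup.isMulCommutative_of_card_eq_prime_sq hG
  · simpa only [Nat.sub_self, Subgroup.upperCentralSeries_zero] using bot_ne_top

theorem IsMaximalClass.of_quotient_center {p : ℕ} {G : Type*} [Group G]
    (hQ : IsMaximalClass p (G ⧸ center G)) (hZ : Nat.card (center G) = p) :
    IsMaximalClass p G := by
  obtain ⟨m, hm, hcard, htop, hne⟩ := isMaximalClass_iff.mp hQ
  refine isMaximalClass_iff.mpr ⟨m + 1, by omega, ?_, ?_, ?_⟩
  · rw [card_eq_card_quotient_mul_card_subgroup (center G), hcard, hZ, pow_succ]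
  · rw [show m + 1 - 1 = m - 1 + 1 by omega,
      ← Subgroup.comap_upperCentralSeries_quotient_center, htop, comap_top]
  · rwa [show m + 1 - 2 = m - 2 + 1 by omega, ← Subgroup.comap_upperCentralSeries_quotient_center,
      Ne, ← comap_top (mk' (center G)), (comap_injective (mk'_surjective _)).eq_iff]

namespace IsPGroup
variable {p : ℕ} [hp : Fact p.Prime] {G : Type*} [Group G] [Finite G]

theorem eq_top_of_card_eq_prime_of_centralizer_eq_self (hpG : IsPGroup p G) {H : Subgroup G}
    (hH : Nat.card H = p) (hcent : centralizer (H : Set G) = H) : H = ⊤ := by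
  by_contra hne
  have hlt := center_lt_of_centralizer_eq_self hcent hne
  have : Nontrivial G := Finite.one_lt_card_iff_nontrivial.mp
    (lt_of_lt_of_le (hH ▸ hp.out.one_lt) (card_le_card_group H))
  have := hpG.center_nontrivial
  rcases hp.out.eq_one_or_self_of_dvd _ (hH ▸ card_dvd_of_le hlt.le) with hZ | hZ
  · exact (Finite.one_lt_card_iff_nontrivial.mpr ‹_›).ne' hZ
  · exact hlt.ne (eq_of_le_of_card_ge hlt.le (by rw [hH, hZ]))

theorem card_center_eq_of_centralizer_eq_self (hpG : IsPGroup p G) {A : Subgroup G}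
    (hcard : Nat.card A = p ^ 2) (hcent : centralizer (A : Set G) = A) (hA : A ≠ ⊤) :
    Nat.card (center G) = p := by
  have hlt := center_lt_of_centralizer_eq_self hcent hA
  have : Nontrivial G := Finite.one_lt_card_iff_nontrivial.mp
    (lt_of_lt_of_le (hcard ▸ Nat.one_lt_pow two_ne_zero hp.out.one_lt) (card_le_card_group A))
  have := hpG.center_nontrivial
  obtain ⟨k, hk, hZ⟩ := (Nat.dvd_prime_pow hp.out).mp (hcard ▸ card_dvd_of_le hlt.le)
  interval_cases k
  · exact absurd hZ (Finite.one_lt_card_iff_nontrivial.mpr ‹_›).ne'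
  · exact hZ.trans (pow_one p)
  · exact absurd (eq_of_le_of_card_ge hlt.le (by rw [hZ, hcard])) hlt.ne

theorem card_centralizer_map_mk'_le (hpG : IsPGroup p G) {A : Subgroup G}
    (hcard : Nat.card A = p ^ 2) (hcent : centralizer (A : Set G) = A) (hA : A ≠ ⊤) :
    Nat.card (centralizer (A.map (mk' (center G)) : Set (G ⧸ center G))) ≤ p ^ 2 := by
  have hZ := hpG.card_center_eq_of_centralizer_eq_self hcard hcent hA
  have hlt := center_lt_of_centralizer_eq_self hcent hA
  obtain ⟨a, haA, haZ⟩ := SetLike.exists_of_lt hlt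
  have hrel : (center G).relIndex A = p := by
    have h := relIndex_mul_relIndex ⊥ (center G) A bot_le hlt.le
    rw [relIndex_bot_left, relIndex_bot_left, hZ, hcard, pow_two] at h
    exact Nat.eq_of_mul_eq_mul_left hp.out.pos h
  have hsup : center G ⊔ closure {a} = A :=
    eq_of_lt_of_le_of_relIndex_prime (hrel ▸ hp.out)
      (left_lt_sup.mpr fun h => haZ (h (subset_closure rfl)))
      (sup_le hlt.le ((closure_le _).mpr (Set.singleton_subset_iff.mpr haA)))
  have hca : centralizer {a} = A := by
    rw [← centralizer_center_sup_closure_singleton, hsup, hcent]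
  have hle : centralizer (A.map (mk' (center G)) : Set (G ⧸ center G)) ≤
      centralizer {mk' (center G) a} :=
    centralizer_le (Set.singleton_subset_iff.mpr ⟨a, haA, rfl⟩)
  refine Nat.le_of_mul_le_mul_left ?_ hp.out.pos
  calc p * Nat.card (centralizer (A.map (mk' (center G)) : Set (G ⧸ center G)))
      = Nat.card ((centralizer (A.map (mk' (center G)) : Set (G ⧸ center G))).comap
          (mk' (center G))) := by rw [card_comap_mk', hZ]
    _ ≤ Nat.card ((centralizer {mk' (center G) a}).comap (mk' (center G))) :=
      card_le_of_le (comap_mono hle)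
    _ ≤ Nat.card (centralizer {a}) * Nat.card (center G) := card_comap_centralizer_le a
    _ = p * p ^ 2 := by rw [hca, hcard, hZ, mul_comm]

theorem exists_card_eq_centralizer_eq_self_quotient_center (hpG : IsPGroup p G) {A : Subgroup G}
    (hcard : Nat.card A = p ^ 2) (hcent : centralizer (A : Set G) = A) (hA : A ≠ ⊤) :
    ∃ B : Subgroup (G ⧸ center G), Nat.card B = p ^ 2 ∧ centralizer (B : Set _) = B := by
  have hZ := hpG.card_center_eq_of_centralizer_eq_self hcard hcent hA
  have hlt := center_lt_of_centralizer_eq_self hcent hA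
  set A' := A.map (mk' (center G))
  set B := centralizer (A' : Set (G ⧸ center G))
  have hcomap : A'.comap (mk' (center G)) = A := comap_map_eq_self ((ker_mk' _).trans_le hlt.le)
  have hA' : Nat.card A' = p := by
    have h := card_comap_mk' (center G) A'
    rw [hcomap, hcard, hZ, pow_two] at h
    exact (Nat.eq_of_mul_eq_mul_left hp.out.pos h).symm
  have hA'B : A' ≤ B := (map_mono hcent.ge).trans (map_centralizer_le_centralizer_image _ _)
  obtain ⟨k, hk⟩ := IsPGroup.iff_card.mp ((hpG.to_quotient (center G)).to_subgroup B)
  have hk2 : k ≤ 2 := (Nat.pow_le_pow_iff_right hp.out.one_lt).mp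
    (hk ▸ hpG.card_centralizer_map_mk'_le hcard hcent hA)
  have h2k : 2 ≤ k := by
    by_contra! h
    have hA'eq : A' = B := eq_of_le_of_card_ge hA'B
      (by rw [hk, hA']; exact (Nat.pow_le_pow_right hp.out.pos (by omega)).trans (pow_one p).le)
    have htop := (hpG.to_quotient _).eq_top_of_card_eq_prime_of_centralizer_eq_self hA' hA'eq.symm
    exact hA (by rw [← hcomap, htop, comap_top])
  have hB : Nat.card B = p ^ 2 := by rw [hk, le_antisymm hk2 h2k]
  refine ⟨B, hB, le_antisymm (centralizer_le hA'B) ?_⟩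
  have := IsPGroup.isMulCommutative_of_card_eq_prime_sq hB
  exact le_centralizer B

theorem isMaximalClass_of_centralizer_eq_self (hpG : IsPGroup p G) {A : Subgroup G}
    (hcard : Nat.card A = p ^ 2) (hcent : centralizer (A : Set G) = A) :
    IsMaximalClass p G := by
  induction hn : Nat.card G using Nat.strong_induction_on generalizing G with
  | _ n ih =>
  by_cases hA : A = ⊤
  · exact isMaximalClass_of_card_eq_prime_sq (by rw [← card_top, ← hA, hcard])
  obtain ⟨B, hB, hcentB⟩ := hpG.exists_card_eq_centralizer_eq_self_quotient_center hcard hcent hA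
  have hZ := hpG.card_center_eq_of_centralizer_eq_self hcard hcent hA
  refine (ih _ ?_ (hpG.to_quotient _) hB hcentB rfl).of_quotient_center hZ
  rw [← hn, card_eq_card_quotient_mul_card_subgroup (center G), hZ]
  exact lt_mul_of_one_lt_right Nat.card_pos hp.out.one_lt

end IsPGroup

theorem stmt_10_general {p : ℕ} (hp : p.Prime) (G : Type*) [Group G] [Finite G]
    (hpG : IsPGroup p G)
    (A : Subgroup G) (hcard : Nat.card A = p ^ 2)
    (hcent : Subgroup.centralizer (A : Set G) = A) :
    IsMaximalClass p G :=
  have : Fact p.Prime := ⟨hp⟩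
  hpG.isMaximalClass_of_centralizer_eq_self hcard hcent

/-- (M. Suzuki) Let `G` be a nonabelian finite `p`-group. If `A < G` has order
`p ^ 2` and `C_G(A) = A`, then `G` is of maximal class. -/
theorem stmt_10 {p : ℕ} (hp : p.Prime) (G : Type*) [Group G] [Finite G]
    (hpG : IsPGroup p G) (hna : ¬ ∀ a b : G, a * b = b * a)
    (A : Subgroup G) (hA : A ≠ ⊤) (hcard : Nat.card A = p ^ 2)
    (hcent : Subgroup.centralizer (A : Set G) = A) :
    IsMaximalClass p G :=
  stmt_10_general hp G hpG A hcard hcent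
end

section
/- Let G be a finite p-group and B ≤ G a nonabelian subgroup of order p^3 with C_G(B) < B. Then G is of maximal class. -/
open Subgroup
open scoped commutatorElement

lemma isMaximalClass_of_nilpotencyClass_eq {p : ℕ} {G : Type*} [Group G]
    [Group.IsNilpotent G] {n : ℕ} (hcard : Nat.card G = p ^ (n + 2))
    (hclass : Group.nilpotencyClass G = n + 1) :
    IsMaximalClass p G := by
  refine ⟨n + 2, by omega, hcard, ?_, fun h ↦ ?_⟩
  · exact Subgroup.upperCentralSeries_eq_top_iff_nilpotencyClass_le.mpr hclass.le
  · have := Subgroup.upperCentralSeries_eq_top_iff_nilpotencyClass_le.mp h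
    omega

section

variable {p : ℕ} [Fact p.Prime] {G : Type*} [Group G]

lemma isMulCommutative_of_card_dvd_prime_sq (h : Nat.card G ∣ p ^ 2) : IsMulCommutative G := by
  obtain ⟨k, hk, hcard⟩ := (Nat.dvd_prime_pow Fact.out).1 h
  rcases Nat.lt_or_ge k 2 with hk2 | hk2
  · have : IsCyclic G := isCyclic_of_card_dvd_prime (p := p) <| by
      rw [hcard]
      exact (pow_dvd_pow p (by omega : k ≤ 1)).trans (pow_one p).dvd
    infer_instance
  · exact IsPGroup.isMulCommutative_of_card_eq_prime_sq (by rw [hcard, show k = 2 by omega])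

lemma card_center_eq_prime_of_not_isMulCommutative (hG : Nat.card G = p ^ 3)
    (hna : ¬ IsMulCommutative G) :
    Nat.card (center G) = p := by
  obtain ⟨k, hk, hZ⟩ := IsPGroup.card_center_eq_prime_pow hG (by norm_num)
  obtain ⟨j, -, hidx⟩ := (Nat.dvd_prime_pow Fact.out).1 (hG ▸ (center G).index_dvd_card)
  have hkj : k + j = 3 := Nat.pow_right_injective (Fact.out : p.Prime).two_le <| by
    simp only [pow_add, ← hZ, ← hidx, card_mul_index, hG]
  rcases Nat.lt_or_ge k 2 with hk2 | hk2
  · rw [hZ, show k = 1 by omega, pow_one]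
  · have : IsCyclic (G ⧸ center G) := isCyclic_of_card_dvd_prime (p := p) <| by
      rw [← index_eq_card, hidx]
      exact (pow_dvd_pow p (by omega : j ≤ 1)).trans (pow_one p).dvd
    exact absurd (isMulCommutative_of_isCyclic_quotient_center_self G) hna

lemma closure_pair_eq_of_card_eq_prime_pow_three {B : Subgroup G} (hB : Nat.card B = p ^ 3)
    {x y : G} (hx : x ∈ B) (hy : y ∈ B) (hxy : ¬ Commute x y) : closure {x, y} = B := by
  have : Finite B := Nat.finite_of_card_ne_zero (by rw [hB]; exact pow_ne_zero _ (NeZero.ne p))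
  have hle : closure {x, y} ≤ B :=
    (closure_le B).mpr (Set.insert_subset hx (Set.singleton_subset_iff.mpr hy))
  obtain ⟨k, hk, hcard⟩ := (Nat.dvd_prime_pow Fact.out).1 (hB ▸ card_dvd_of_le hle)
  refine eq_of_le_of_card_ge hle
    (hB ▸ hcard ▸ pow_le_pow_right₀ (Fact.out : p.Prime).one_le ?_)
  by_contra! hk3
  have : IsMulCommutative (closure {x, y}) :=
    isMulCommutative_of_card_dvd_prime_sq (p := p) (hcard ▸ pow_dvd_pow p (by omega))
  exact hxy (setLike_mul_comm (s := closure {x, y}) (subset_closure (Set.mem_insert x _))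
    (subset_closure (Set.mem_insert_of_mem x rfl)))

lemma centralizer_eq_map_center {B : Subgroup G} (h : centralizer (B : Set G) ≤ B) :
    centralizer (B : Set G) = (center B).map B.subtype := by
  ext g
  constructor
  · exact fun hg ↦ ⟨⟨g, h hg⟩, mem_center_iff.mpr fun b ↦ Subtype.ext (hg b b.2), rfl⟩
  · rintro ⟨b, hb, rfl⟩
    exact mem_centralizer_iff.mpr fun g hg ↦
      congrArg Subtype.val (mem_center_iff.mp hb ⟨g, hg⟩)

lemma card_mul_card_map_mk' {N H : Subgroup G} [N.Normal] (h : N ≤ H) :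
    Nat.card N * Nat.card (H.map (QuotientGroup.mk' N)) = Nat.card H := by
  rw [← relIndex_ker, QuotientGroup.ker_mk', ← relIndex_bot_left, ← relIndex_bot_left,
    relIndex_mul_relIndex _ _ _ bot_le h]

lemma card_quotient_center {n : ℕ} (hZ : Nat.card (center G) = p)
    (hG : Nat.card G = p ^ (n + 1)) : Nat.card (G ⧸ center G) = p ^ n := by
  rw [card_eq_card_quotient_mul_card_subgroup (center G), hZ, pow_succ] at hG
  exact Nat.eq_of_mul_eq_mul_right (Fact.out : p.Prime).pos hG

lemma relIndex_centralizer_singleton_le [Finite G] {x : G} {T : Subgroup G}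
    (hT : ∀ t ∈ T, ⁅t, x⁆ ∈ center G) :
    (centralizer {x}).relIndex T ≤ Nat.card (center G) := by
  let φ : T →* center G :=
    { toFun := fun t ↦ ⟨⁅(t : G), x⁆, hT t t.2⟩
      map_one' := Subtype.ext (commutatorElement_one_left x)
      map_mul' := fun t s ↦ by
        have hc := mem_center_iff.mp (hT s s.2)
        ext
        change ⁅(t : G) * s, x⁆ = ⁅(t : G), x⁆ * ⁅(s : G), x⁆
        rw [commutatorElement_mul_left_eq_conj_mul, hc, hc]
        group }
  have hker : φ.ker = (centralizer {x}).subgroupOf T := by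
    ext t
    simp [φ, mem_subgroupOf, mem_centralizer_singleton_iff, commutatorElement_eq_one_iff_mul_comm]
  rw [relIndex, ← hker, index_ker]
  exact card_le_card_group _

lemma IsPGroup.center_eq_of_le_of_card_eq_prime [Finite G] (hG : IsPGroup p G) {H : Subgroup G}
    (hH : Nat.card H = p) (hle : center G ≤ H) : center G = H := by
  have : Nontrivial G := Finite.one_lt_card_iff_nontrivial.mp <|
    (Fact.out : p.Prime).one_lt.trans_le (hH ▸ card_le_card_group H)
  have hZ : 1 < Nat.card (center G) := Finite.one_lt_card_iff_nontrivial.mpr hG.center_nontrivial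
  have hZp : Nat.card (center G) = p :=
    ((Fact.out : p.Prime).eq_one_or_self_of_dvd _ (hH ▸ card_dvd_of_le hle)).resolve_left hZ.ne'
  exact eq_of_le_of_card_ge hle (hH ▸ hZp.ge)

section SelfCentralizing

variable {B : Subgroup G}

lemma card_centralizer_eq_prime (hB : Nat.card B = p ^ 3) (hna : ¬ IsMulCommutative B)
    (hcent : centralizer (B : Set G) ≤ B) : Nat.card (centralizer (B : Set G)) = p := by
  rw [centralizer_eq_map_center hcent, card_map_of_injective B.subtype_injective,
    card_center_eq_prime_of_not_isMulCommutative hB hna]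

variable [Finite G]

lemma IsPGroup.centralizer_eq_center (hG : IsPGroup p G) (hB : Nat.card B = p ^ 3)
    (hna : ¬ IsMulCommutative B) (hcent : centralizer (B : Set G) ≤ B) :
    centralizer (B : Set G) = center G :=
  (hG.center_eq_of_le_of_card_eq_prime (card_centralizer_eq_prime hB hna hcent)
    (center_le_centralizer _)).symm

lemma IsPGroup.card_center_eq_prime (hG : IsPGroup p G) (hB : Nat.card B = p ^ 3)
    (hna : ¬ IsMulCommutative B) (hcent : centralizer (B : Set G) ≤ B) :
    Nat.card (center G) = p :=
  hG.centralizer_eq_center hB hna hcent ▸ card_centralizer_eq_prime hB hna hcent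

lemma IsPGroup.card_map_mk'_center (hG : IsPGroup p G) (hB : Nat.card B = p ^ 3)
    (hna : ¬ IsMulCommutative B) (hcent : centralizer (B : Set G) ≤ B) :
    Nat.card (B.map (QuotientGroup.mk' (center G))) = p ^ 2 := by
  have h := card_mul_card_map_mk' (hG.centralizer_eq_center hB hna hcent ▸ hcent)
  rw [hG.card_center_eq_prime hB hna hcent, hB, pow_succ'] at h
  exact Nat.eq_of_mul_eq_mul_left (Fact.out : p.Prime).pos h

lemma IsPGroup.centralizer_map_mk'_center (hG : IsPGroup p G) (hB : Nat.card B = p ^ 3)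
    (hna : ¬ IsMulCommutative B) (hcent : centralizer (B : Set G) ≤ B) :
    centralizer (B.map (QuotientGroup.mk' (center G)) : Set (G ⧸ center G)) =
      B.map (QuotientGroup.mk' (center G)) := by
  have hCZ := hG.centralizer_eq_center hB hna hcent
  have hZ := hG.card_center_eq_prime hB hna hcent
  set π := QuotientGroup.mk' (center G)
  obtain ⟨x, hx, y, hy, hxy⟩ : ∃ x ∈ B, ∃ y ∈ B, ¬ Commute x y := by
    by_contra! h
    exact hna (le_centralizer_iff_isMulCommutative.mp fun x hx y hy ↦ h y hy x hx)
  have hCxy : centralizer (B : Set G) = centralizer {x} ⊓ centralizer {y} := by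
    rw [← closure_pair_eq_of_card_eq_prime_pow_three hB hx hy hxy, centralizer_closure,
      centralizer_eq_iInf]
    simp [iInf_or, iInf_inf_eq]
  set T := (centralizer (B.map π : Set (G ⧸ center G))).comap π
  have hT : ∀ b ∈ B, ∀ t ∈ T, ⁅t, b⁆ ∈ center G := fun b hb t ht ↦ by
    rw [← QuotientGroup.ker_mk' (center G), MonoidHom.mem_ker, map_commutatorElement,
      commutatorElement_eq_one_iff_mul_comm]
    exact (mem_centralizer_iff.mp ht (π b) (mem_map_of_mem π hb)).symm
  have hBT : B ≤ T := map_le_iff_le_comap.mp <| le_centralizer_iff_isMulCommutative.mpr <|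
    IsPGroup.isMulCommutative_of_card_eq_prime_sq (hG.card_map_mk'_center hB hna hcent)
  have hTB : Nat.card T ≤ Nat.card B := calc
    Nat.card T = Nat.card (center G) * (center G).relIndex T := by
      rw [← relIndex_bot_left, ← relIndex_bot_left,
        relIndex_mul_relIndex _ _ _ bot_le ((hCZ ▸ hcent).trans hBT)]
    _ ≤ p * (p * p) := by
      rw [hZ, ← hCZ, hCxy]
      gcongr
      exact (relIndex_inf_le ..).trans (Nat.mul_le_mul
        (hZ ▸ relIndex_centralizer_singleton_le (hT x hx))
        (hZ ▸ relIndex_centralizer_singleton_le (hT y hy)))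
    _ = Nat.card B := by rw [hB]; ring
  rw [← map_comap_eq_self_of_surjective (QuotientGroup.mk'_surjective (center G)) (centralizer _)]
  exact congrArg (Subgroup.map π) (eq_of_le_of_card_ge hBT hTB).symm

end SelfCentralizing

lemma nilpotencyClass_eq_one_of_card_eq_prime_sq (hG : Nat.card G = p ^ 2) :
    Group.nilpotencyClass G = 1 := by
  have hab := IsPGroup.isMulCommutative_of_card_eq_prime_sq hG
  have : Finite G := Nat.finite_of_card_ne_zero (by rw [hG]; exact pow_ne_zero _ (NeZero.ne p))
  have := (IsPGroup.of_card hG).isNilpotent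
  have : Nontrivial G := (IsPGroup.of_card hG).nontrivial_iff_card.mpr ⟨2, two_pos, hG⟩
  have h1 := Group.IsNilpotent.nilpotencyClass_le_one_iff.mpr hab
  have h0 := mt Group.nilpotencyClass_zero_iff_subsingleton.mp (not_subsingleton G)
  omega

theorem IsPGroup.nilpotencyClass_eq_of_centralizer_le [Finite G] (hG : IsPGroup p G) {n : ℕ}
    (hcard : Nat.card G = p ^ (n + 2)) {H : Subgroup G} (hH : Nat.card H = p ^ 2)
    (hC : centralizer (H : Set G) ≤ H) : Group.nilpotencyClass G = n + 1 := by
  induction n generalizing G with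
  | zero => exact nilpotencyClass_eq_one_of_card_eq_prime_sq hcard
  | succ n ih =>
    obtain ⟨K, hK, hHK⟩ := Sylow.exists_subgroup_card_pow_prime_le p
      (hcard ▸ pow_dvd_pow p (by omega : 3 ≤ n + 1 + 2)) H hH (by norm_num)
    have hKc : centralizer (K : Set G) ≤ K := (centralizer_le hHK).trans (hC.trans hHK)
    have hKna : ¬ IsMulCommutative K := fun hKab ↦ by
      have := card_le_of_le (((le_centralizer K).trans (centralizer_le hHK)).trans hC)
      rw [hK, hH] at this
      exact absurd this (Nat.pow_lt_pow_right (Fact.out : p.Prime).one_lt (by norm_num)).not_ge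
    have := hG.isNilpotent
    have : Nontrivial G := hG.nontrivial_iff_card.mpr ⟨_, by omega, hcard⟩
    rw [Group.nilpotencyClass_eq_quotient_center_plus_one,
      ih (hG.to_quotient _) (card_quotient_center (hG.card_center_eq_prime hK hKna hKc) hcard)
        (hG.card_map_mk'_center hK hKna hKc) (hG.centralizer_map_mk'_center hK hKna hKc).le]

end

/-- Let `G` be a finite `p`-group and `B ≤ G` a nonabelian subgroup of order `p ^ 3`
with `C_G(B) < B`. Then `G` is of maximal class. -/
theorem stmt_12 {p : ℕ} (hp : p.Prime) (G : Type*) [Group G] [Finite G]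
    (hpG : IsPGroup p G) (B : Subgroup G) (hB : Nat.card B = p ^ 3)
    (hna : ¬ ∀ a ∈ B, ∀ b ∈ B, a * b = b * a)
    (hcent : Subgroup.centralizer (B : Set G) < B) :
    IsMaximalClass p G := by
  have : Fact p.Prime := ⟨hp⟩
  have hBna : ¬ IsMulCommutative B := fun _ ↦ hna fun _ ha _ hb ↦ setLike_mul_comm ha hb
  obtain ⟨n, hn⟩ := IsPGroup.iff_card.mp hpG
  obtain ⟨n, rfl⟩ : ∃ k, n = k + 3 := ⟨n - 3, by
    have := (Nat.pow_dvd_pow_iff_le_right hp.one_lt).mp (hB ▸ hn ▸ card_subgroup_dvd_card B)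
    omega⟩
  have := hpG.isNilpotent
  have : Nontrivial G := hpG.nontrivial_iff_card.mpr ⟨_, by omega, hn⟩
  refine isMaximalClass_of_nilpotencyClass_eq (n := n + 1) hn ?_
  rw [Group.nilpotencyClass_eq_quotient_center_plus_one,
    (hpG.to_quotient _).nilpotencyClass_eq_of_centralizer_le
      (card_quotient_center (hpG.card_center_eq_prime hB hBna hcent.le) hn)
      (hpG.card_map_mk'_center hB hBna hcent.le)
      (hpG.centralizer_map_mk'_center hB hBna hcent.le).le]
end

section
/- Let G be a finite p-group, N ⊲ G of order > p, and suppose G/N has order > p and cyclic center. If R/N is a normal subgroup of order p in G/N, then R is not of maximal class. -/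
/-!
If `R` had maximal class, then `|R| = p ^ (k + 1)` with `|N| = p ^ k`, `k ≥ 2`, and `R` would have
class `k`; we show that its class is less than `k`. As `Z(G/N)` is cyclic, `R/N` is the unique
minimal normal subgroup of `G/N`, so `R` lies in every normal subgroup of `G` properly containing
`N`. This property passes to quotients, and we induct on `k`.

For `k = 2` the group `N` is abelian. If `C_G(N) > N`, then `R ≤ C_G(N)`, so `R` is abelian. If
`C_G(N) = N`, take `Z ≤ N ∩ Z(G)` of order `p` and `x ∈ N \ Z`; since `N/Z` is central in `G/Z`,
`g ↦ [x, g]` is a homomorphism `G → Z` with kernel `C_G(x) ≤ C_G(N) = N`, so `|G : N| ≤ p`.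

For `k > 2`, factor out such a central `Z ≤ N` of order `p`: the hypotheses hold in `G/Z` with
`k - 1`, and passing from `R` to `R/Z` lowers the class by at most one.
-/

open Subgroup QuotientGroup
open scoped commutatorElement

theorem IsCyclic.subgroup_eq_of_card_eq {G : Type*} [Group G] [IsCyclic G] [Finite G]
    {A B : Subgroup G} (hAB : Nat.card A = Nat.card B) : A = B := by
  let := IsCyclic.commGroup (α := G)
  have key : ∀ H : Subgroup G, H = (powMonoidHom (Nat.card H) : G →* G).ker := fun H => by
    refine eq_of_le_of_card_ge (fun x hx => ?_) ?_
    · exact congrArg Subtype.val (pow_card_eq_one' (x := (⟨x, hx⟩ : H)))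
    · rw [IsCyclic.card_powMonoidHom_ker, Nat.gcd_eq_right (card_subgroup_dvd_card H)]
  rw [key A, key B, hAB]

namespace Subgroup

variable {G : Type*} [Group G]

theorem normal_of_le_center {Z : Subgroup G} (hZ : Z ≤ center G) : Z.Normal :=
  ⟨fun n hn g => by rwa [mem_center_iff.mp (hZ hn) g, mul_inv_cancel_right]⟩

theorem card_mul_relIndex {H K : Subgroup G} (h : H ≤ K) :
    Nat.card H * H.relIndex K = Nat.card K := by
  rw [← relIndex_bot_left, ← relIndex_bot_left, relIndex_mul_relIndex _ _ _ bot_le h]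

theorem eq_of_lt_of_le_of_relIndex_eq_prime {p : ℕ} (hp : p.Prime) {A B C : Subgroup G}
    (hAB : A < B) (hBC : B ≤ C) (hAC : A.relIndex C = p) : B = C := by
  have hmul := relIndex_mul_relIndex _ _ _ hAB.le hBC
  rw [hAC] at hmul
  have hAB1 : A.relIndex B ≠ 1 := fun h => hAB.not_ge (relIndex_eq_one.mp h)
  have hBC1 : B.relIndex C = 1 := by
    rcases Nat.prime_mul_iff.mp (hmul ▸ hp) with ⟨-, h⟩ | ⟨-, h⟩
    · exact h
    · exact absurd h hAB1
  exact le_antisymm hBC (relIndex_eq_one.mp hBC1)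

theorem eq_of_le_of_card_eq_of_isCyclic {C A B : Subgroup G} [IsCyclic C] [Finite C]
    (hA : A ≤ C) (hB : B ≤ C) (hAB : Nat.card A = Nat.card B) : A = B := by
  have h := IsCyclic.subgroup_eq_of_card_eq (A := A.subgroupOf C) (B := B.subgroupOf C) (by
    rwa [Nat.card_congr (subgroupOfEquivOfLe hA).toEquiv,
      Nat.card_congr (subgroupOfEquivOfLe hB).toEquiv])
  rwa [subgroupOf_inj, inf_of_le_left hA, inf_of_le_left hB] at h

theorem index_centralizer_singleton_le_card {Z : Subgroup G} [Finite Z] (hZ : Z ≤ center G)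
    {x : G} (hx : ∀ g, ⁅x, g⁆ ∈ Z) : (centralizer {x}).index ≤ Nat.card Z := by
  have hcomm : ∀ g h : G, h * ⁅x, g⁆ = ⁅x, g⁆ * h := fun g => mem_center_iff.mp (hZ (hx g))
  let φ : G →* Z := MonoidHom.mk' (fun g => ⟨⁅x, g⁆, hx g⟩) fun g h => by
    ext
    calc ⁅x, g * h⁆ = x * g * x⁻¹ * ⁅x, h⁆ * g⁻¹ := by simp only [commutatorElement_def]; group
      _ = ⁅x, g⁆ * ⁅x, h⁆ := by
        rw [mul_assoc _ ⁅x, h⁆, ← hcomm h g⁻¹]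
        simp only [commutatorElement_def]
        group
  have hker : φ.ker = centralizer {x} := by
    ext g
    rw [MonoidHom.mem_ker, mem_centralizer_singleton_iff, eq_comm (a := g * x),
      ← commutatorElement_eq_one_iff_mul_comm, ← OneMemClass.coe_eq_one]
    rfl
  rw [← hker, index_ker]
  exact card_le_card_group _

theorem isMulCommutative_of_le_centralizer {p : ℕ} [Fact p.Prime] {N R : Subgroup G} [N.Normal]
    (hRN : N.relIndex R = p) (hR : R ≤ centralizer (N : Set G)) : IsMulCommutative R := by
  have : IsCyclic (R.map (mk' N)) := by
    apply isCyclic_of_prime_card (p := p)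
    rw [← relIndex_ker, ker_mk', hRN]
  refine ((mk' N).subgroupMap R).isMulCommutative_of_isCyclic_of_ker_le_center fun x hx => ?_
  rw [ker_subgroupMap, ker_mk', mem_subgroupOf] at hx
  exact mem_center_iff.mpr fun y => Subtype.ext (mem_centralizer_iff.mp (hR y.2) x hx).symm

theorem nilpotencyClass_le_map_add_one {H : Type*} [Group H] {f : G →* H}
    (hf : f.ker ≤ center G) (R : Subgroup G) [Group.IsNilpotent (R.map f)] :
    Group.nilpotencyClass R ≤ Group.nilpotencyClass (R.map f) + 1 := by
  refine Group.nilpotencyClass_le_of_ker_le_center (f.subgroupMap R) fun x hx => ?_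
  rw [ker_subgroupMap, mem_subgroupOf] at hx
  exact mem_center_iff.mpr fun y => Subtype.ext (mem_center_iff.mp (hf hx) y)

theorem map_le_of_forall_lt_normal {H : Type*} [Group H] {f : G →* H}
    (hf : Function.Surjective f) {N R : Subgroup G}
    (hR : ∀ K : Subgroup G, K.Normal → N < K → R ≤ K) :
    ∀ K : Subgroup H, K.Normal → N.map f < K → R.map f ≤ K := by
  intro K hK hNK
  have hN : N < K.comap f := by
    refine lt_of_le_of_ne (map_le_iff_le_comap.mp hNK.le) fun h => hNK.ne ?_
    rw [h, map_comap_eq_self_of_surjective hf]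
  exact map_le_iff_le_comap.mpr (hR _ (hK.comap f) hN)

end Subgroup

namespace IsPGroup

variable {p : ℕ} [Fact p.Prime] {G : Type*} [Group G] [Finite G]

theorem inf_center_ne_bot (hG : IsPGroup p G) {N : Subgroup G} [N.Normal] (hN : N ≠ ⊥) :
    N ⊓ center G ≠ ⊥ := by
  have hdvd : p ∣ Nat.card N :=
    (hG.to_subgroup N).card_eq_or_dvd.resolve_left (mt card_eq_one.mp hN)
  have hG' : IsPGroup p (ConjAct G) := hG.of_equiv ConjAct.toConjAct
  obtain ⟨x, hx, hx1⟩ :=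
    hG'.exists_fixed_point_of_prime_dvd_card_of_fixed_point N hdvd (a := 1) fun g => smul_one g
  refine (ne_bot_iff_exists_ne_one).mpr ⟨⟨x, x.2, mem_center_iff.mpr fun g => ?_⟩, ?_⟩
  · have := congrArg Subtype.val (hx (ConjAct.toConjAct g))
    rw [ConjAct.Subgroup.val_conj_smul, ConjAct.smul_def, ConjAct.ofConjAct_toConjAct] at this
    exact (eq_mul_inv_iff_mul_eq.mp this.symm).symm
  · exact fun h => hx1 (Subtype.ext (congrArg Subtype.val h).symm)

theorem exists_le_inf_center_card_eq (hG : IsPGroup p G) {N : Subgroup G} [N.Normal]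
    (hN : N ≠ ⊥) : ∃ Z ≤ N ⊓ center G, Nat.card Z = p := by
  have hdvd : p ∣ Nat.card ↥(N ⊓ center G) :=
    (hG.to_subgroup _).card_eq_or_dvd.resolve_left (mt card_eq_one.mp (hG.inf_center_ne_bot hN))
  obtain ⟨x, hx⟩ := exists_prime_orderOf_dvd_card' p hdvd
  exact ⟨zpowers (x : G), zpowers_le.mpr x.2, by rw [Nat.card_zpowers, orderOf_coe, hx]⟩

theorem le_center_of_card_eq (hG : IsPGroup p G) {A : Subgroup G} [A.Normal]
    (hA : Nat.card A = p) : A ≤ center G := by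
  have hA' : A ≠ ⊥ := by
    rw [ne_eq, ← card_eq_one, hA]
    exact (Fact.out : p.Prime).one_lt.ne'
  obtain ⟨Z, hZ, hZp⟩ := hG.exists_le_inf_center_card_eq hA'
  have : Z = A := eq_of_le_of_card_ge (hZ.trans inf_le_left) (by rw [hA, hZp])
  exact this ▸ hZ.trans inf_le_right

theorem le_of_isCyclic_center (hG : IsPGroup p G) [IsCyclic (center G)] {A K : Subgroup G}
    [A.Normal] (hA : Nat.card A = p) [K.Normal] (hK : K ≠ ⊥) : A ≤ K := by
  obtain ⟨B, hB, hBp⟩ := hG.exists_le_inf_center_card_eq hK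
  have : A = B := eq_of_le_of_card_eq_of_isCyclic (hG.le_center_of_card_eq hA)
    (hB.trans inf_le_right) (hA.trans hBp.symm)
  exact this ▸ hB.trans inf_le_left

theorem le_of_lt_of_isCyclic_center_quotient (hG : IsPGroup p G) {N R : Subgroup G} [N.Normal]
    [IsCyclic (center (G ⧸ N))] [(R.map (mk' N)).Normal] (hRN : Nat.card (R.map (mk' N)) = p) :
    ∀ K : Subgroup G, K.Normal → N < K → R ≤ K := by
  intro K hK hNK
  have : (K.map (mk' N)).Normal := hK.map _ (mk'_surjective N)
  have hK' : K.map (mk' N) ≠ ⊥ := by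
    rw [ne_eq, Subgroup.map_eq_bot_iff, ker_mk']
    exact hNK.not_ge
  have := (hG.to_quotient N).le_of_isCyclic_center hRN hK'
  rw [map_le_map_iff', ker_mk', sup_eq_left.mpr hNK.le] at this
  exact le_sup_left.trans this

theorem index_le_of_centralizer_eq_self (hG : IsPGroup p G) {N : Subgroup G} [N.Normal]
    (hN : Nat.card N = p ^ 2) (hC : centralizer (N : Set G) = N) : N.index ≤ p := by
  have hp : p.Prime := Fact.out
  have hNbot : N ≠ ⊥ := by
    rw [ne_eq, ← card_eq_one, hN]
    exact (one_lt_pow₀ hp.one_lt two_ne_zero).ne'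
  obtain ⟨Z, hZ, hZp⟩ := hG.exists_le_inf_center_card_eq hNbot
  have hZN : Z ≤ N := hZ.trans inf_le_left
  have hZC : Z ≤ center G := hZ.trans inf_le_right
  have hZrel : Z.relIndex N = p := by
    have := card_mul_relIndex hZN
    rw [hZp, hN, sq] at this
    exact Nat.eq_of_mul_eq_mul_left hp.pos this
  have := normal_of_le_center hZC
  have : (N.map (mk' Z)).Normal := Normal.map ‹_› _ (mk'_surjective Z)
  have hNZ : N ≤ Z.upperCentralSeriesStep := by
    rw [Subgroup.upperCentralSeriesStep_eq_comap_center, ← map_le_iff_le_comap]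
    refine (hG.to_quotient Z).le_center_of_card_eq ?_
    rw [← relIndex_ker, ker_mk', hZrel]
  obtain ⟨x, hxN, hxZ⟩ := SetLike.exists_of_lt (lt_of_le_of_ne hZN fun h => by
    rw [← h, hZp] at hN
    exact (lt_self_pow₀ hp.one_lt one_lt_two).ne hN)
  have hNx : Z ⊔ zpowers x = N :=
    eq_of_lt_of_le_of_relIndex_eq_prime hp (left_lt_sup.mpr fun h => hxZ (zpowers_le.mp h))
      (sup_le hZN (zpowers_le.mpr hxN)) hZrel
  have hcent : centralizer {x} ≤ N := by
    rw [← hC, le_centralizer_iff, ← hNx]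
    refine sup_le (hZC.trans (center_le_centralizer _)) (zpowers_le.mpr ?_)
    exact mem_centralizer_iff.mpr fun g hg => mem_centralizer_singleton_iff.mp hg
  calc N.index ≤ (centralizer {x}).index := index_antitone hcent
    _ ≤ Nat.card Z := index_centralizer_singleton_le_card hZC (hNZ hxN)
    _ = p := hZp

theorem nilpotencyClass_lt_of_card_eq_pow {k : ℕ} (hk : 2 ≤ k) (hG : IsPGroup p G)
    {N R : Subgroup G} [N.Normal] (hNR : N ≤ R) (hRN : N.relIndex R = p)
    (hN : Nat.card N = p ^ k) (hindex : p < N.index)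
    (hR : ∀ K : Subgroup G, K.Normal → N < K → R ≤ K) : Group.nilpotencyClass R < k := by
  have hp : p.Prime := Fact.out
  induction k, hk using Nat.le_induction generalizing G with
  | base =>
    have := (hG.to_subgroup R).isNilpotent
    suffices IsMulCommutative R from
      Nat.lt_succ_of_le (Group.IsNilpotent.nilpotencyClass_le_one_iff.mpr this)
    have hNC : N ≤ centralizer N :=
      le_centralizer_iff_isMulCommutative.mpr (isMulCommutative_of_card_eq_prime_sq hN)
    refine isMulCommutative_of_le_centralizer hRN
      (hR _ inferInstance (lt_of_le_of_ne hNC fun h => ?_))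
    exact hindex.not_ge (hG.index_le_of_centralizer_eq_self hN h.symm)
  | succ k hk ih =>
    have hNbot : N ≠ ⊥ := by
      rw [ne_eq, ← card_eq_one, hN]
      exact (one_lt_pow₀ hp.one_lt (by omega)).ne'
    obtain ⟨Z, hZ, hZp⟩ := hG.exists_le_inf_center_card_eq hNbot
    have hZN : Z ≤ N := hZ.trans inf_le_left
    have hZC : Z ≤ center G := hZ.trans inf_le_right
    have := normal_of_le_center hZC
    have : (N.map (mk' Z)).Normal := Normal.map ‹_› _ (mk'_surjective Z)
    have := ((hG.to_quotient Z).to_subgroup (R.map (mk' Z))).isNilpotent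
    have hN' : Nat.card (N.map (mk' Z)) = p ^ k := by
      have := card_mul_relIndex hZN
      rw [hZp, hN, pow_succ', ← ker_mk' Z, relIndex_ker] at this
      exact Nat.eq_of_mul_eq_mul_left hp.pos this
    have hRN' : (N.map (mk' Z)).relIndex (R.map (mk' Z)) = p := by
      rw [relIndex_map_map, ker_mk', sup_eq_left.mpr hZN, sup_eq_left.mpr (hZN.trans hNR), hRN]
    have hindex' : p < (N.map (mk' Z)).index := by
      rwa [index_map_eq _ (mk'_surjective Z) (by rwa [ker_mk'])]
    have := ih (hG.to_quotient Z) (map_mono hNR) hRN' hN' hindex'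
      (map_le_of_forall_lt_normal (mk'_surjective Z) hR)
    have := nilpotencyClass_le_map_add_one (f := mk' Z) (by rwa [ker_mk']) R
    omega

end IsPGroup

/-- Let `G` be a finite `p`-group, `N ⊴ G` of order `> p`, and suppose `G ⧸ N` has
order `> p` and cyclic center. If `R/N` is a normal subgroup of order `p` in `G ⧸ N`,
then `R` is not of maximal class. -/
theorem stmt_14 {p : ℕ} (hp : p.Prime) (G : Type*) [Group G] [Finite G]
    (hpG : IsPGroup p G) (N : Subgroup G) (hN : N.Normal) (hNcard : p < Nat.card N)
    (hq : p < Nat.card (G ⧸ N)) (hcyc : IsCyclic (Subgroup.center (G ⧸ N)))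
    (R : Subgroup G) (hNR : N ≤ R)
    (hRnorm : (R.map (QuotientGroup.mk' N)).Normal)
    (hRcard : Nat.card (R.map (QuotientGroup.mk' N)) = p) :
    ¬ IsMaximalClass p R := by
  have := Fact.mk hp
  rintro ⟨m, -, hRm, -, hclass⟩
  have hRN : N.relIndex R = p := by rwa [← ker_mk' N, relIndex_ker]
  obtain ⟨k, hk⟩ := IsPGroup.iff_card.mp (hpG.to_subgroup N)
  have hmk : m = k + 1 := by
    have := card_mul_relIndex hNR
    rw [hk, hRN, hRm, ← pow_succ] at this
    exact Nat.pow_right_injective hp.two_le this.symm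
  have hk2 : 2 ≤ k := by
    rw [hk] at hNcard
    exact (Nat.pow_lt_pow_iff_right hp.one_lt).mp (by rwa [pow_one])
  have := (hpG.to_subgroup R).isNilpotent
  refine hclass (Subgroup.upperCentralSeries_eq_top_iff_nilpotencyClass_le.mpr ?_)
  have := hpG.nilpotencyClass_lt_of_card_eq_pow hk2 hNR hRN hk hq
    (hpG.le_of_lt_of_isCyclic_center_quotient hRcard)
  omega
end
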